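/- Let k ≥ 3 and r = 2k−1. Let U = ℝ^r with standard basis e₁,…,e_r, and define endomorphisms X, H, Y of U by: X e_i = e_{i+1} for i < r and X e_r = 0; H e_i = (r+1−2i) e_i; Y e_i = (i−1)(r+1−i) e_{i−1} for i ≥ 2 and Y e₁ = 0. Define a symmetric bilinear form B on U by B(e_i, e_j) = 0 if i+j ≠ r+1 and B(e_i, e_{r+1−i}) = (−1)^i. Let V = U ⊗ ℝ², let ε be the standard symplectic form on ℝ² (ε(ε₁,ε₂) = 1 for the standard basis ε₁,ε₂), and let σ be the skew-symmetric form on V given by σ(u⊗w, u'⊗w') = B(u,u')·ε(w,w'). Let 𝔞 ⊆ End(V) be the subspace spanned by the operators A ⊗ id_{ℝ²} for A ∈ span{X,H,Y} together with the operators id_U ⊗ M for M ∈ End(ℝ²). Then the modified first prolongation of 𝔞 with respect to σ is trivial: if a linear map φ : V → 𝔞 and a vector v ∈ V satisfy φ(a)b − φ(b)a = σ(a,b)·v for all a,b ∈ V, then φ = 0 and v = 0. (This is the symbol computation for rank 3 distributions with rectangular Young diagram of type (k,0).) -/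

import Mathlib

open scoped TensorProduct

noncomputable section

/-- The irreducible `sl(2)`-module `U = ℝ^r` with `r = 2k − 1`, standard basis `e₁, …, e_r`
(zero-based in Lean). -/
abbrev Umod (k : ℕ) := Fin (2 * k - 1) → ℝ

/-- `X e_i = e_{i+1}` for `i < r` and `X e_r = 0`. -/
def Xop (k : ℕ) : Umod k →ₗ[ℝ] Umod k :=
  Matrix.toLin'
    (Matrix.of fun b a : Fin (2 * k - 1) => if (b : ℕ) = (a : ℕ) + 1 then (1 : ℝ) else 0)

/-- `H e_i = (r + 1 − 2i) e_i`, i.e. (zero-based `a = i − 1`, `r = 2k − 1`)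
the eigenvalue is `2k − 2a − 2`. -/
def Hop (k : ℕ) : Umod k →ₗ[ℝ] Umod k :=
  Matrix.toLin'
    (Matrix.diagonal fun a : Fin (2 * k - 1) => (2 * (k : ℝ)) - 2 * ((a : ℕ) : ℝ) - 2)

/-- `Y e_i = (i − 1)(r + 1 − i) e_{i−1}` for `i ≥ 2` and `Y e₁ = 0`; zero-based the
coefficient on `e_a` (`a = i − 1`) is `a · (2k − 1 − a)`. -/
def Yop (k : ℕ) : Umod k →ₗ[ℝ] Umod k :=
  Matrix.toLin'
    (Matrix.of fun b a : Fin (2 * k - 1) =>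
      if (a : ℕ) = (b : ℕ) + 1 then ((a : ℕ) : ℝ) * ((2 * k - 1 - (a : ℕ) : ℕ) : ℝ) else 0)

/-- The symmetric bilinear form `B` on `U` with `B(e_i, e_j) = 0` for `i + j ≠ r + 1` and
`B(e_i, e_{r+1−i}) = (−1)^i` (1-based indices; `Fin.rev` realizes `a ↦ r − 1 − a`). -/
def Bform (k : ℕ) : Umod k →ₗ[ℝ] Umod k →ₗ[ℝ] ℝ :=
  ∑ a : Fin (2 * k - 1), ((-1 : ℝ) ^ ((a : ℕ) + 1)) •
    ((LinearMap.proj a : Umod k →ₗ[ℝ] ℝ).smulRight (LinearMap.proj a.rev : Umod k →ₗ[ℝ] ℝ))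

/-- The standard symplectic form `ε` on `ℝ²`: `ε(ε₁, ε₂) = 1`. -/
def epsForm : (Fin 2 → ℝ) →ₗ[ℝ] (Fin 2 → ℝ) →ₗ[ℝ] ℝ :=
  (LinearMap.proj (0 : Fin 2) : (Fin 2 → ℝ) →ₗ[ℝ] ℝ).smulRight
      (LinearMap.proj (1 : Fin 2) : (Fin 2 → ℝ) →ₗ[ℝ] ℝ)
    - (LinearMap.proj (1 : Fin 2) : (Fin 2 → ℝ) →ₗ[ℝ] ℝ).smulRight
      (LinearMap.proj (0 : Fin 2) : (Fin 2 → ℝ) →ₗ[ℝ] ℝ)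

/-- `V = U ⊗ ℝ²`. -/
abbrev Vmod (k : ℕ) := Umod k ⊗[ℝ] (Fin 2 → ℝ)

/-- The skew-symmetric form `σ = B ⊗ ε` on `V`:
`σ(u ⊗ w, u' ⊗ w') = B(u, u') · ε(w, w')`. -/
def sigmaForm (k : ℕ) : Vmod k →ₗ[ℝ] Vmod k →ₗ[ℝ] ℝ :=
  LinearMap.BilinForm.tmul (Bform k) epsForm

/-- The subalgebra `𝔞 ⊆ End(V)` spanned by the operators `A ⊗ id` for
`A ∈ span{X, H, Y}` together with the operators `id ⊗ M` for `M ∈ End(ℝ²)`. -/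
def aAlg (k : ℕ) : Submodule ℝ (Vmod k →ₗ[ℝ] Vmod k) :=
  Submodule.span ℝ
    (((fun A : Umod k →ₗ[ℝ] Umod k => LinearMap.rTensor (Fin 2 → ℝ) A) ''
        (Submodule.span ℝ ({Xop k, Hop k, Yop k} : Set (Umod k →ₗ[ℝ] Umod k)) : Set _))
      ∪ Set.range (fun M : (Fin 2 → ℝ) →ₗ[ℝ] (Fin 2 → ℝ) => LinearMap.lTensor (Umod k) M))

/-!
Write `φ(e_a ⊗ ε_s) = A ⊗ 1 + 1 ⊗ M` with `A ∈ sl(2)`. On a slice `U ⊗ ε_s` the form `σ`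
vanishes, so compressing `φ` to that slice gives a symmetric map `ψ : U → sl(2) ⊕ ℝ·id`,
`ψ(u)w = ψ(w)u`. Each of `X, H, Y` moves a basis vector `e_b` by at most one step and `H`
separates the weights, so comparing coordinates far from `a` and `b` forces `ψ = 0` once
`dim U ≥ 5`; hence `φ` takes values in `id ⊗ gl(2)`. Pairing `e_a` with a `B`-orthogonal
`e_b ≠ e_a` then kills the `gl(2)` part, so `φ = 0`, and `v = 0` because `σ ≠ 0`.
-/

section TensorSlices

variable {R M N ι : Type*} [CommRing R] [AddCommGroup M] [Module R M] [AddCommGroup N]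
  [Module R N]

def rightCoord (s : ι) : M ⊗[R] (ι → R) →ₗ[R] M :=
  (TensorProduct.rid R M).toLinearMap ∘ₗ (LinearMap.proj s).lTensor M

@[simp]
lemma rightCoord_tmul (s : ι) (u : M) (w : ι → R) : rightCoord s (u ⊗ₜ w) = w s • u := by
  simp [rightCoord]

lemma rightCoord_rTensor (s : ι) (A : Module.End R M) (z : M ⊗[R] (ι → R)) :
    rightCoord s (A.rTensor (ι → R) z) = A (rightCoord s z) := by
  induction z using TensorProduct.induction_on <;> simp_all

def leftCoord (b : ι) : (ι → R) ⊗[R] N →ₗ[R] N :=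
  (TensorProduct.lid R N).toLinearMap ∘ₗ (LinearMap.proj b).rTensor N

@[simp]
lemma leftCoord_tmul (b : ι) (u : ι → R) (w : N) : leftCoord b (u ⊗ₜ w) = u b • w := by
  simp [leftCoord]

lemma leftCoord_lTensor (b : ι) (f : Module.End R N) (z : (ι → R) ⊗[R] N) :
    leftCoord b (f.lTensor (ι → R) z) = f (leftCoord b z) := by
  induction z using TensorProduct.induction_on <;> simp_all

variable [DecidableEq ι]

def sliceCompress (s : ι) : Module.End R (M ⊗[R] (ι → R)) →ₗ[R] Module.End R M :=
  LinearMap.llcomp R M _ M (rightCoord s) ∘ₗ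
    LinearMap.lcomp R _ ((TensorProduct.mk R M (ι → R)).flip (Pi.single s 1))

lemma sliceCompress_apply (s : ι) (T : Module.End R (M ⊗[R] (ι → R))) (u : M) :
    sliceCompress s T u = rightCoord s (T (u ⊗ₜ Pi.single s 1)) :=
  rfl

lemma sliceCompress_rTensor (s : ι) (A : Module.End R M) :
    sliceCompress s (A.rTensor (ι → R)) = A := by
  ext u; simp [sliceCompress_apply]

lemma sliceCompress_lTensor (s : ι) (f : Module.End R (ι → R)) :
    sliceCompress s (f.lTensor M) = f (Pi.single s 1) s • LinearMap.id := by
  ext u; simp [sliceCompress_apply]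

lemma mem_range_lTensorHom_of_sliceCompress_eq_zero (s : ι) {T : Module.End R (M ⊗[R] (ι → R))}
    (hT : T ∈ LinearMap.range (LinearMap.rTensorHom (ι → R)) ⊔
      LinearMap.range (LinearMap.lTensorHom M))
    (h : sliceCompress s T = 0) : T ∈ LinearMap.range (LinearMap.lTensorHom M) := by
  obtain ⟨_, ⟨A, rfl⟩, _, ⟨f, rfl⟩, rfl⟩ := Submodule.mem_sup.1 hT
  -- `A` is a scalar, and scalars can be moved across the tensor product.
  have hA : A = -(f (Pi.single s 1) s • LinearMap.id) := by
    simpa [sliceCompress_rTensor, sliceCompress_lTensor, add_eq_zero_iff_eq_neg] using h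
  refine ⟨f - f (Pi.single s 1) s • LinearMap.id, ?_⟩
  simp only [LinearMap.coe_lTensorHom, LinearMap.lTensor_sub, LinearMap.lTensor_smul,
    LinearMap.lTensor_id, hA, LinearMap.coe_rTensorHom, LinearMap.rTensor_neg,
    LinearMap.rTensor_smul, LinearMap.rTensor_id]
  abel

end TensorSlices

def slTwoAddScalars (k : ℕ) : Submodule ℝ (Module.End ℝ (Umod k)) :=
  Submodule.span ℝ {Xop k, Hop k, Yop k, LinearMap.id}

lemma mem_slTwoAddScalars_iff {k : ℕ} {T : Module.End ℝ (Umod k)} :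
    T ∈ slTwoAddScalars k ↔
      ∃ x h y m : ℝ, T = x • Xop k + h • Hop k + y • Yop k + m • LinearMap.id := by
  simp only [slTwoAddScalars, Submodule.mem_span_insert, Submodule.mem_span_singleton]
  constructor
  · rintro ⟨x, _, ⟨h, _, ⟨y, _, ⟨m, rfl⟩, rfl⟩, rfl⟩, rfl⟩
    exact ⟨x, h, y, m, by abel⟩
  · rintro ⟨x, h, y, m, rfl⟩
    exact ⟨x, _, ⟨h, _, ⟨y, _, ⟨m, rfl⟩, rfl⟩, rfl⟩, by abel⟩

lemma slTwoAddScalars_single_apply (k : ℕ) (x h y m : ℝ) (b c : Fin (2 * k - 1)) :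
    (x • Xop k + h • Hop k + y • Yop k + m • LinearMap.id : Module.End ℝ (Umod k))
        (Pi.single b 1) c =
      (if (c : ℕ) = b + 1 then x else 0) +
        (if (c : ℕ) = b then h * (2 * k - 2 * b - 2) + m else 0) +
        (if (b : ℕ) = c + 1 then y * (b * (2 * k - 1 - b : ℕ)) else 0) := by
  simp only [Xop, Hop, Yop, Fin.is_le', Nat.cast_sub, LinearMap.add_apply,
    LinearMap.smul_apply, Matrix.toLin'_apply, Matrix.mulVec_single, MulOpposite.op_one, one_smul,
    Matrix.col_diagonal, LinearMap.id_coe, id_eq, Pi.add_apply, Pi.smul_apply, Matrix.col_apply,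
    Matrix.of_apply, smul_eq_mul, mul_ite, mul_one, mul_zero, Pi.single_apply, Fin.ext_iff]
  split_ifs <;> ring

lemma apply_single_apply_eq_zero_of_far {k : ℕ} {T : Module.End ℝ (Umod k)}
    (hT : T ∈ slTwoAddScalars k) {a c : Fin (2 * k - 1)} (hac : (a : ℕ) + 2 ≤ c ∨ (c : ℕ) + 2 ≤ a) :
    T (Pi.single a 1) c = 0 := by
  obtain ⟨x, h, y, m, rfl⟩ := mem_slTwoAddScalars_iff.1 hT
  rw [slTwoAddScalars_single_apply, if_neg (by omega), if_neg (by omega), if_neg (by omega)]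
  simp

lemma exists_far_pair {n : ℕ} (hn : 5 ≤ n) (a : ℕ) :
    ∃ c₁ c₂ : ℕ, c₁ < c₂ ∧ c₂ < n ∧ (a + 2 ≤ c₁ ∨ c₁ + 2 ≤ a) ∧ (a + 2 ≤ c₂ ∨ c₂ + 2 ≤ a) := by
  rcases (show a ≤ 1 ∨ a = 2 ∨ 3 ≤ a by omega) with h | h | h
  · exact ⟨3, 4, by omega⟩
  · exact ⟨0, 4, by omega⟩
  · exact ⟨0, 1, by omega⟩

theorem slTwoAddScalars_prolongation_eq_zero {k : ℕ} (hk : 3 ≤ k)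
    (ψ : Umod k →ₗ[ℝ] Module.End ℝ (Umod k)) (hψ : ∀ u, ψ u ∈ slTwoAddScalars k)
    (hsymm : ∀ u w, ψ u w = ψ w u) : ψ = 0 := by
  refine (Pi.basisFun ℝ _).ext fun a => ?_
  obtain ⟨x, h, y, m, hψa⟩ := mem_slTwoAddScalars_iff.1 (hψ (Pi.single a 1))
  have key : ∀ b c : ℕ, (hb : b < 2 * k - 1) → (hc : c < 2 * k - 1) → (a + 2 ≤ c ∨ c + 2 ≤ a) →
      (if c = b + 1 then x else 0) + (if c = b then h * (2 * k - 2 * b - 2) + m else 0) +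
        (if b = c + 1 then y * (b * (2 * k - 1 - b : ℕ)) else 0) = 0 := by
    intro b c hb hc hac
    have := apply_single_apply_eq_zero_of_far (hψ (Pi.single ⟨b, hb⟩ 1)) (c := ⟨c, hc⟩) hac
    rwa [← hsymm, hψa, slTwoAddScalars_single_apply] at this
  obtain ⟨c₁, c₂, h12, hc₂, hac₁, hac₂⟩ := exists_far_pair (n := 2 * k - 1) (by omega) a
  have hx : x = 0 := by
    have := key (c₂ - 1) c₂ (by omega) hc₂ hac₂
    rwa [if_pos (by omega), if_neg (by omega), if_neg (by omega), add_zero, add_zero] at this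
  have hy : y = 0 := by
    have := key (c₁ + 1) c₁ (by omega) (by omega) hac₁
    rw [if_neg (by omega), if_neg (by omega), if_pos rfl, zero_add, zero_add] at this
    have hb : ((c₁ + 1 : ℕ) : ℝ) * ((2 * k - 1 - (c₁ + 1) : ℕ) : ℝ) ≠ 0 :=
      mul_ne_zero (by positivity) (Nat.cast_ne_zero.2 (by omega))
    exact (mul_eq_zero.1 this).resolve_right hb
  have hhm : h = 0 ∧ m = 0 := by
    have e₁ := key c₁ c₁ (by omega) (by omega) hac₁
    have e₂ := key c₂ c₂ hc₂ hc₂ hac₂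
    simp only [if_neg (show c₁ ≠ c₁ + 1 by omega), if_neg (show c₂ ≠ c₂ + 1 by omega), if_true,
      zero_add, add_zero] at e₁ e₂
    have hc : (c₂ : ℝ) - c₁ ≠ 0 := sub_ne_zero.2 (Nat.cast_injective.ne (by omega))
    have hh : h = 0 := by
      have : h * (2 * ((c₂ : ℝ) - c₁)) = 0 := by linear_combination e₁ - e₂
      simpa [hc] using this
    exact ⟨hh, by simpa [hh] using e₁⟩
  rw [Pi.basisFun_apply, hψa, hx, hy, hhm.1, hhm.2]
  simp

lemma aAlg_le_sup (k : ℕ) :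
    aAlg k ≤ LinearMap.range (LinearMap.rTensorHom (Fin 2 → ℝ)) ⊔
      LinearMap.range (LinearMap.lTensorHom (Umod k)) := by
  refine Submodule.span_le.2 ?_
  rintro T (⟨A, -, rfl⟩ | ⟨f, rfl⟩)
  · exact Submodule.mem_sup_left ⟨A, rfl⟩
  · exact Submodule.mem_sup_right ⟨f, rfl⟩

lemma sliceCompress_mem_slTwoAddScalars {k : ℕ} (s : Fin 2) {T : Module.End ℝ (Vmod k)}
    (hT : T ∈ aAlg k) : sliceCompress s T ∈ slTwoAddScalars k := by
  suffices aAlg k ≤ (slTwoAddScalars k).comap (sliceCompress s) from this hT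
  refine Submodule.span_le.2 ?_
  rintro T (⟨A, hA, rfl⟩ | ⟨f, rfl⟩)
  · rw [SetLike.mem_coe, Submodule.mem_comap, sliceCompress_rTensor]
    refine Submodule.span_mono ?_ hA
    intro X hX
    simp only [Set.mem_insert_iff, Set.mem_singleton_iff] at hX ⊢
    tauto
  · rw [SetLike.mem_coe, Submodule.mem_comap, sliceCompress_lTensor]
    exact Submodule.smul_mem _ _ (Submodule.subset_span (by simp))

lemma epsForm_self (w : Fin 2 → ℝ) : epsForm w w = 0 := by
  simp [epsForm, mul_comm]

lemma Bform_single_left {k : ℕ} (a : Fin (2 * k - 1)) (u : Umod k) :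
    Bform k (Pi.single a 1) u = (-1) ^ ((a : ℕ) + 1) * u a.rev := by
  simp [Bform, Pi.single_apply]

lemma sigmaForm_tmul {k : ℕ} (u u' : Umod k) (w w' : Fin 2 → ℝ) :
    sigmaForm k (u ⊗ₜ w) (u' ⊗ₜ w') = Bform k u u' * epsForm w w' := by
  simp [sigmaForm, mul_comm]

lemma eq_zero_of_forall_mem_range_lTensorHom {k : ℕ} (hk : 2 ≤ k)
    (φ : Vmod k →ₗ[ℝ] (Vmod k →ₗ[ℝ] Vmod k)) (v : Vmod k)
    (hv : ∀ a b : Vmod k, φ a b - φ b a = sigmaForm k a b • v)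
    (hl : ∀ a s, φ (Pi.single a 1 ⊗ₜ Pi.single s 1) ∈
      LinearMap.range (LinearMap.lTensorHom (Umod k))) :
    φ = 0 := by
  refine ((Pi.basisFun ℝ _).tensorProduct (Pi.basisFun ℝ (Fin 2))).ext fun ⟨a, s⟩ => ?_
  rw [Module.Basis.tensorProduct_apply, Pi.basisFun_apply, Pi.basisFun_apply,
    LinearMap.zero_apply]
  obtain ⟨f, hf⟩ := hl a s
  obtain ⟨b, hba, hb⟩ := Fin.exists_ne_and_ne_of_two_lt a a.rev (by omega)
  have hf0 : f = 0 := (Pi.basisFun ℝ (Fin 2)).ext fun t => by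
    obtain ⟨g, hg⟩ := hl b t
    have hswap : φ (Pi.single a 1 ⊗ₜ Pi.single s 1) (Pi.single b 1 ⊗ₜ Pi.single t 1) =
        φ (Pi.single b 1 ⊗ₜ Pi.single t 1) (Pi.single a 1 ⊗ₜ Pi.single s 1) := by
      rw [← sub_eq_zero, hv, sigmaForm_tmul, Bform_single_left, Pi.single_eq_of_ne hb.symm]
      simp
    have := congrArg (leftCoord b) hswap
    rw [← hf, ← hg] at this
    simpa [leftCoord_lTensor, Pi.single_eq_of_ne hba] using this
  rw [← hf, hf0, map_zero]

/-- (Rectangular symbol computation.)  For `k ≥ 3` the modified first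
prolongation of `𝔞 = sl(2) ⊗ id + id ⊗ gl(2) ⊆ End(U ⊗ ℝ²)` with respect to `σ = B ⊗ ε`
is trivial: any linear `φ : V → 𝔞` and `v ∈ V` with `φ(a)b − φ(b)a = σ(a,b) • v` for all
`a, b ∈ V` satisfy `φ = 0` and `v = 0`. -/
theorem stmt_14 (k : ℕ) (hk : 3 ≤ k)
    (φ : Vmod k →ₗ[ℝ] (Vmod k →ₗ[ℝ] Vmod k)) (hφ : ∀ z : Vmod k, φ z ∈ aAlg k)
    (v : Vmod k) (hv : ∀ a b : Vmod k, φ a b - φ b a = sigmaForm k a b • v) :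
    φ = 0 ∧ v = 0 := by
  have hslice (s : Fin 2) (u : Umod k) :
      sliceCompress s (φ (u ⊗ₜ Pi.single s 1)) = 0 := by
    let ψ := sliceCompress s ∘ₗ φ ∘ₗ
      (TensorProduct.mk ℝ (Umod k) (Fin 2 → ℝ)).flip (Pi.single s 1)
    have hsymm (u w : Umod k) : ψ u w = ψ w u := by
      have := hv (u ⊗ₜ Pi.single s 1) (w ⊗ₜ Pi.single s 1)
      rw [sigmaForm_tmul, epsForm_self, mul_zero, zero_smul, sub_eq_zero] at this
      simp [ψ, sliceCompress_apply, this]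
    exact LinearMap.congr_fun (slTwoAddScalars_prolongation_eq_zero hk ψ
      (fun u => sliceCompress_mem_slTwoAddScalars s (hφ _)) hsymm) u
  have hφ0 : φ = 0 := eq_zero_of_forall_mem_range_lTensorHom (by omega) φ v hv fun a s =>
    mem_range_lTensorHom_of_sliceCompress_eq_zero s (aAlg_le_sup k (hφ _)) (hslice s _)
  refine ⟨hφ0, ?_⟩
  let a₀ : Fin (2 * k - 1) := ⟨0, by omega⟩
  have := hv (Pi.single a₀ 1 ⊗ₜ Pi.single 0 1) (Pi.single a₀.rev 1 ⊗ₜ Pi.single 1 1)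
  simpa [hφ0, sigmaForm_tmul, Bform_single_left, epsForm] using this.symm

end
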